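/- Borel–Bernstein Theorem (convergence direction): if (b_n) is a sequence of positive reals with Σ_n 1/b_n < ∞, then for Lebesgue-almost every x in [0,1), the inequality a_n(x) ≥ b_n holds for only finitely many n. -/

import Mathlib

/-!
The Gauss measure `dx / ((1 + x) log 2)` on `[0, 1)` is invariant under the Gauss map `τ` and
equivalent to Lebesgue measure there. Since `a_n(x) ≥ b_n` forces `τ^{n-1} x ∈ (0, 1/b_n]`,
invariance bounds the Gauss measure of this event by `1 / (b_n log 2)`. These bounds are summable,
so by Borel–Cantelli almost every `x` lies in only finitely many of the events.

Invariance is checked on the rays `[t, ∞)`: for `0 < t ≤ 1` the part of `τ⁻¹ [t, ∞)` in `[0, 1)`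
is the disjoint union of the intervals `(1/(k+2), 1/(k+1+t)]`, `k ≥ 0`, whose Gauss measures
telescope.
-/

open MeasureTheory Filter Set

/-- The Gauss map `τ(x) = 1/x - ⌊1/x⌋`, with `τ(0) = 0`. -/
noncomputable def gaussMap (x : ℝ) : ℝ := if x = 0 then 0 else 1 / x - ⌊1 / x⌋

/-- The `n`-th continued fraction digit `a_n(x) = ⌊1/τ^{n-1}(x)⌋`. -/
noncomputable def cfDigit (n : ℕ) (x : ℝ) : ℕ := ⌊1 / (gaussMap^[n - 1] x)⌋₊

/-- The Gauss measure on `[0,1)` with density `1/((x+1) log 2)`. -/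
noncomputable def gaussMeasure : Measure ℝ :=
  (volume.restrict (Set.Ico (0 : ℝ) 1)).withDensity
    (fun x => ENNReal.ofReal (1 / ((x + 1) * Real.log 2)))

open Topology

theorem Int.le_fract_iff_exists_nat {t y : ℝ} (ht : 0 < t) (hy : 0 ≤ y) :
    t ≤ Int.fract y ↔ ∃ k : ℕ, k + t ≤ y ∧ y < k + 1 := by
  constructor
  · intro h
    have hk : (⌊y⌋₊ : ℝ) = ⌊y⌋ := natCast_floor_eq_intCast_floor hy
    rw [Int.fract, ← hk] at h
    exact ⟨⌊y⌋₊, by linarith, Nat.lt_floor_add_one y⟩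
  · rintro ⟨k, hkt, hyk⟩
    have hfloor : ⌊y⌋ = k := Int.floor_eq_iff.2 ⟨by push_cast; linarith, by push_cast; linarith⟩
    rw [Int.fract, hfloor]
    push_cast
    linarith

theorem mem_Ioc_inv_inv_iff {a b x : ℝ} (ha : 0 < a) (hb : 0 < b) :
    x ∈ Ioc a⁻¹ b⁻¹ ↔ 0 < x ∧ b ≤ x⁻¹ ∧ x⁻¹ < a := by
  constructor
  · rintro ⟨hlo, hhi⟩
    have hx : 0 < x := (inv_pos.2 ha).trans hlo
    exact ⟨hx, (le_inv_comm₀ hx hb).1 hhi, (inv_lt_comm₀ ha hx).1 hlo⟩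
  · rintro ⟨hx, hlo, hhi⟩
    exact ⟨(inv_lt_comm₀ ha hx).2 hhi, (le_inv_comm₀ hx hb).2 hlo⟩

theorem Real.logb_inv_add_one {b a : ℝ} (ha : 0 < a) :
    Real.logb b (a⁻¹ + 1) = Real.logb b (a + 1) - Real.logb b a := by
  rw [← Real.logb_div (by linarith) ha.ne', add_div, div_self ha.ne', inv_eq_one_div, add_comm]

theorem hasDerivAt_logb_two_add_one {x : ℝ} (hx : -1 < x) :
    HasDerivAt (fun y => Real.logb 2 (y + 1)) (1 / ((x + 1) * Real.log 2)) x := by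
  have h := ((hasDerivAt_id' x).add_const 1).log (by linarith) |>.div_const (Real.log 2)
  rw [div_div] at h
  exact h

theorem Monotone.tsum_ofReal_sub_succ {u : ℕ → ℝ} {l : ℝ} (hu : Monotone u)
    (hl : Tendsto u atTop (𝓝 l)) :
    ∑' k, ENNReal.ofReal (u (k + 1) - u k) = ENNReal.ofReal (l - u 0) := by
  have hnonneg : ∀ k, 0 ≤ u (k + 1) - u k := fun k => sub_nonneg.2 (hu k.le_succ)
  have hsum : HasSum (fun k => u (k + 1) - u k) (l - u 0) := by
    refine (hasSum_iff_tendsto_nat_of_nonneg hnonneg _).2 ?_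
    simp only [Finset.sum_range_sub]
    exact hl.sub_const (u 0)
  rw [← ENNReal.ofReal_tsum_of_nonneg hnonneg hsum.summable, hsum.tsum_eq]

theorem MeasureTheory.ae_eventually_notMem_of_measurePreserving {α β : Type*}
    [MeasurableSpace α] [MeasurableSpace β] {μ : Measure α} {ν : Measure β} {f : ℕ → α → β}
    (hf : ∀ n, MeasurePreserving (f n) μ ν) {s : ℕ → Set β} (hs : ∀ n, NullMeasurableSet (s n) ν)
    (hsum : ∑' n, ν (s n) ≠ ⊤) : ∀ᵐ x ∂μ, ∀ᶠ n in atTop, f n x ∉ s n := by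
  have hpre : ∀ n, μ (f n ⁻¹' s n) = ν (s n) := fun n => (hf n).measure_preimage (hs n)
  exact ae_eventually_notMem (s := fun n => f n ⁻¹' s n) (by simpa only [hpre] using hsum)

theorem gaussMap_eq_fract (x : ℝ) : gaussMap x = Int.fract x⁻¹ := by
  rcases eq_or_ne x 0 with rfl | hx
  · simp [gaussMap]
  · rw [gaussMap, if_neg hx, one_div, Int.fract]

theorem measurable_gaussMap : Measurable gaussMap := by
  rw [funext gaussMap_eq_fract]
  exact measurable_fract.comp measurable_inv

theorem gaussMap_mem_Ico (x : ℝ) : gaussMap x ∈ Ico (0 : ℝ) 1 := by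
  rw [gaussMap_eq_fract]
  exact ⟨Int.fract_nonneg _, Int.fract_lt_one _⟩

theorem gaussMap_preimage_Ici_inter_Ico {t : ℝ} (ht : 0 < t) :
    gaussMap ⁻¹' Ici t ∩ Ico 0 1 = ⋃ k : ℕ, Ioc ((k + 2 : ℝ)⁻¹) ((k + 1 + t)⁻¹) := by
  ext x
  simp only [mem_inter_iff, mem_preimage, mem_Ici, mem_Ico, mem_iUnion, gaussMap_eq_fract]
  constructor
  · rintro ⟨hτ, hx0, hx1⟩
    have hxpos : 0 < x := hx0.lt_of_ne (by rintro rfl; simp at hτ; linarith)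
    have hinv : 1 < x⁻¹ := (one_lt_inv₀ hxpos).2 hx1
    obtain ⟨k, hkt, hxk⟩ := (Int.le_fract_iff_exists_nat ht (by linarith)).1 hτ
    cases k with
    | zero => norm_num at hxk; linarith
    | succ j =>
      push_cast at hkt hxk
      exact ⟨j, (mem_Ioc_inv_inv_iff (by positivity) (by positivity)).2
        ⟨hxpos, by linarith, by linarith⟩⟩
  · rintro ⟨k, hk⟩
    obtain ⟨hxpos, hhi, hlo⟩ := (mem_Ioc_inv_inv_iff (by positivity) (by positivity)).1 hk
    refine ⟨(Int.le_fract_iff_exists_nat ht (inv_nonneg.2 hxpos.le)).2 ⟨k + 1, ?_, ?_⟩, hxpos.le,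
      (one_lt_inv₀ hxpos).1 (by linarith)⟩ <;> push_cast <;> linarith

theorem pairwise_disjoint_Ioc_inv {t : ℝ} (ht : 0 < t) :
    Pairwise (Function.onFun Disjoint fun k : ℕ => Ioc ((k + 2 : ℝ)⁻¹) ((k + 1 + t)⁻¹)) := by
  have hfloor : ∀ (k : ℕ) x, x ∈ Ioc ((k + 2 : ℝ)⁻¹) ((k + 1 + t)⁻¹) → ⌊x⁻¹⌋₊ = k + 1 :=
    fun k x hx => by
      obtain ⟨hxpos, hlo, hhi⟩ := (mem_Ioc_inv_inv_iff (by positivity) (by positivity)).1 hx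
      rw [Nat.floor_eq_iff (by positivity)]
      push_cast
      constructor <;> linarith
  exact fun i j hij => disjoint_left.2 fun x hi hj =>
    hij (by have := (hfloor i x hi).symm.trans (hfloor j x hj); omega)

theorem gaussMap_iterate_mem_Ioc_of_le_cfDigit {n : ℕ} {x c : ℝ} (hc : 0 < c)
    (h : c ≤ cfDigit n x) : gaussMap^[n - 1] x ∈ Ioc 0 (1 / c) := by
  set y := gaussMap^[n - 1] x
  have hy1 : 1 ≤ 1 / y := Nat.floor_pos.1 (Nat.cast_pos.1 (hc.trans_le h))
  have hy : 0 < y := one_div_pos.1 (by linarith)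
  exact ⟨hy, (le_one_div hc hy).1 (h.trans (Nat.floor_le (by positivity)))⟩

theorem gaussMeasure_apply (s : Set ℝ) :
    gaussMeasure s = ∫⁻ x in s ∩ Ico 0 1, ENNReal.ofReal (1 / ((x + 1) * Real.log 2)) := by
  rw [gaussMeasure, withDensity_apply', Measure.restrict_restrict' measurableSet_Ico]

theorem gaussMeasure_inter_Ico (s : Set ℝ) : gaussMeasure (s ∩ Ico 0 1) = gaussMeasure s := by
  rw [gaussMeasure_apply, gaussMeasure_apply, inter_assoc, inter_self]

instance : NullSingletonClass gaussMeasure := by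
  unfold gaussMeasure
  infer_instance

theorem gaussMeasure_Ico {a b : ℝ} (ha : 0 ≤ a) (hab : a ≤ b) (hb : b ≤ 1) :
    gaussMeasure (Ico a b) = ENNReal.ofReal (Real.logb 2 (b + 1) - Real.logb 2 (a + 1)) := by
  have hcont : ContinuousOn (fun x : ℝ => 1 / ((x + 1) * Real.log 2)) (Icc a b) :=
    continuousOn_const.div (by fun_prop) fun x hx =>
      mul_ne_zero (by linarith [hx.1]) (Real.log_pos one_lt_two).ne'
  have hnonneg : 0 ≤ᵐ[volume.restrict (Ioc a b)] fun x : ℝ => 1 / ((x + 1) * Real.log 2) :=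
    ae_restrict_of_forall_mem measurableSet_Ioc fun x hx => by
      have : 0 < x + 1 := by linarith [hx.1]
      have := Real.log_pos one_lt_two
      positivity
  rw [gaussMeasure_apply, inter_eq_left.2 (Ico_subset_Ico ha hb),
    setLIntegral_congr Ico_ae_eq_Ioc,
    ← ofReal_integral_eq_lintegral_ofReal (hcont.integrableOn_Icc.mono_set Ioc_subset_Icc_self)
      hnonneg,
    ← intervalIntegral.integral_of_le hab,
    intervalIntegral.integral_eq_sub_of_hasDerivAt
      (fun x hx => hasDerivAt_logb_two_add_one (by linarith [(uIcc_of_le hab ▸ hx).1]))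
      (hcont.intervalIntegrable_of_Icc hab)]

theorem gaussMeasure_Ioc {a b : ℝ} (ha : 0 ≤ a) (hab : a ≤ b) (hb : b ≤ 1) :
    gaussMeasure (Ioc a b) = ENNReal.ofReal (Real.logb 2 (b + 1) - Real.logb 2 (a + 1)) := by
  rw [← measure_congr Ico_ae_eq_Ioc, gaussMeasure_Ico ha hab hb]

theorem gaussMeasure_Ici {t : ℝ} (ht0 : 0 ≤ t) (ht1 : t ≤ 1) :
    gaussMeasure (Ici t) = ENNReal.ofReal (1 - Real.logb 2 (t + 1)) := by
  have hset : Ici t ∩ Ico 0 1 = Ico t 1 := by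
    ext x
    simp only [mem_inter_iff, mem_Ici, mem_Ico]
    grind
  rw [← gaussMeasure_inter_Ico, hset, gaussMeasure_Ico ht0 ht1 le_rfl,
    one_add_one_eq_two, Real.logb_self_eq_one one_lt_two]

instance : IsProbabilityMeasure gaussMeasure :=
  ⟨by
    rw [← gaussMeasure_inter_Ico, univ_inter, gaussMeasure_Ico le_rfl zero_le_one le_rfl]
    norm_num⟩

theorem gaussMeasure_le_smul_volume : gaussMeasure ≤ ENNReal.ofReal (1 / Real.log 2) • volume := by
  have hlog := Real.log_pos one_lt_two
  calc gaussMeasure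
      ≤ (volume.restrict (Ico (0 : ℝ) 1)).withDensity fun _ => ENNReal.ofReal (1 / Real.log 2) :=
        withDensity_mono <| ae_restrict_of_forall_mem measurableSet_Ico fun x hx =>
          ENNReal.ofReal_le_ofReal <| one_div_le_one_div_of_le hlog (by nlinarith [hx.1])
    _ = ENNReal.ofReal (1 / Real.log 2) • volume.restrict (Ico (0 : ℝ) 1) := withDensity_const _
    _ ≤ ENNReal.ofReal (1 / Real.log 2) • volume := by
        gcongr
        exact Measure.restrict_le_self

theorem volume_restrict_Ico_absolutelyContinuous_gaussMeasure :
    volume.restrict (Ico (0 : ℝ) 1) ≪ gaussMeasure :=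
  withDensity_absolutelyContinuous' (by fun_prop) <|
    ae_restrict_of_forall_mem measurableSet_Ico fun x hx => by
      have : 0 < x + 1 := by linarith [hx.1]
      have := Real.log_pos one_lt_two
      positivity

theorem gaussMeasure_gaussMap_preimage_Ici {t : ℝ} (ht0 : 0 < t) (ht1 : t ≤ 1) :
    gaussMeasure (gaussMap ⁻¹' Ici t) = ENNReal.ofReal (1 - Real.logb 2 (t + 1)) := by
  set u : ℕ → ℝ := fun k => Real.logb 2 ((k + 1 + t) / (k + 2)) with hu
  have hpiece : ∀ k : ℕ, gaussMeasure (Ioc ((k + 2 : ℝ)⁻¹) ((k + 1 + t)⁻¹)) =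
      ENNReal.ofReal (u (k + 1) - u k) := fun k => by
    rw [gaussMeasure_Ioc (by positivity) (inv_anti₀ (by positivity) (by linarith))
      (inv_le_one_of_one_le₀ (by linarith)), Real.logb_inv_add_one (by positivity),
      Real.logb_inv_add_one (by positivity)]
    simp only [hu]
    rw [Real.logb_div (by positivity) (by positivity),
      Real.logb_div (by positivity) (by positivity)]
    push_cast
    ring_nf
  have hmono : Monotone u := monotone_nat_of_le_succ fun k => by
    refine Real.logb_le_logb_of_le one_lt_two (by positivity) ?_
    rw [div_le_div_iff₀ (by positivity) (by positivity)]
    push_cast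
    nlinarith
  have hlim : Tendsto u atTop (𝓝 0) := by
    have hsmall : Tendsto (fun k : ℕ => (1 - t) / ((k : ℝ) + 2)) atTop (𝓝 0) :=
      tendsto_const_nhds.div_atTop (tendsto_natCast_atTop_atTop.atTop_add tendsto_const_nhds)
    have hratio : Tendsto (fun k : ℕ => ((k : ℝ) + 1 + t) / (k + 2)) atTop (𝓝 1) := by
      refine (sub_zero (1 : ℝ) ▸ hsmall.const_sub 1).congr fun k => ?_
      field_simp
      ring
    simpa only [hu, Real.logb_one, Function.comp_def] using
      (Real.continuousAt_logb one_ne_zero).tendsto.comp hratio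
  rw [← gaussMeasure_inter_Ico, gaussMap_preimage_Ici_inter_Ico ht0,
    measure_iUnion (pairwise_disjoint_Ioc_inv ht0) fun _ => measurableSet_Ioc]
  simp only [hpiece]
  rw [hmono.tsum_ofReal_sub_succ hlim]
  congr 1
  simp only [hu, Nat.cast_zero, zero_add]
  rw [Real.logb_div (by positivity) two_ne_zero, Real.logb_self_eq_one one_lt_two, add_comm 1 t]
  ring

theorem gaussMeasure_gaussMap_preimage_Ici_eq (t : ℝ) :
    gaussMeasure (gaussMap ⁻¹' Ici t) = gaussMeasure (Ici t) := by
  by_cases ht : t ∈ Ioc 0 1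
  · rw [gaussMeasure_gaussMap_preimage_Ici ht.1 ht.2, gaussMeasure_Ici ht.1.le ht.2]
  -- Both `x` and `gaussMap x` lie in `[0, 1)`, so `t` is either below or above both.
  have hset : gaussMap ⁻¹' Ici t ∩ Ico 0 1 = Ici t ∩ Ico 0 1 := by
    ext x
    simp only [mem_inter_iff, mem_preimage, mem_Ici, and_congr_left_iff]
    intro hx
    have hτ := gaussMap_mem_Ico x
    simp only [mem_Ioc, not_and_or, not_lt, not_le] at ht
    rcases ht with ht | ht
    · exact ⟨fun _ => by linarith [hx.1], fun _ => by linarith [hτ.1]⟩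
    · exact ⟨fun h => by linarith [hτ.2], fun h => by linarith [hx.2]⟩
  rw [← gaussMeasure_inter_Ico, hset, gaussMeasure_inter_Ico]

theorem measurePreserving_gaussMap : MeasurePreserving gaussMap gaussMeasure gaussMeasure :=
  ⟨measurable_gaussMap, Measure.ext_of_Ici _ _ fun t => by
    rw [Measure.map_apply measurable_gaussMap measurableSet_Ici,
      gaussMeasure_gaussMap_preimage_Ici_eq]⟩

theorem borel_bernstein_convergence (b : ℕ → ℝ) (hb : ∀ n, 0 < b n)
    (hsum : Summable (fun n => 1 / b n)) :
    ∀ᵐ x ∂(volume.restrict (Set.Ico (0 : ℝ) 1)), Irrational x →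
      {n : ℕ | b n ≤ (cfDigit n x : ℝ)}.Finite := by
  have hmeasure : ∑' n, gaussMeasure (Ioc 0 (1 / b n)) ≠ ⊤ := by
    refine ne_top_of_le_ne_top ?_
      (ENNReal.tsum_le_tsum fun n => gaussMeasure_le_smul_volume (Ioc 0 (1 / b n)))
    simp only [Measure.smul_apply, smul_eq_mul, Real.volume_Ioc, sub_zero, ENNReal.tsum_mul_left]
    rw [← ENNReal.ofReal_tsum_of_nonneg (fun n => (one_div_pos.2 (hb n)).le) hsum]
    exact ENNReal.mul_ne_top ENNReal.ofReal_ne_top ENNReal.ofReal_ne_top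
  have hae := ae_eventually_notMem_of_measurePreserving
    (fun n => measurePreserving_gaussMap.iterate (n - 1))
    (fun n => measurableSet_Ioc.nullMeasurableSet) hmeasure
  filter_upwards [volume_restrict_Ico_absolutelyContinuous_gaussMeasure.ae_le hae] with x hx _
  rw [← Nat.cofinite_eq_atTop] at hx
  exact (eventually_cofinite.1 hx).subset fun n hn =>
    not_not.2 (gaussMap_iterate_mem_Ioc_of_le_cfDigit (hb n) hn)
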